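/- Let 𝕍 = V ⊕ V* = E ⊕ F be a Lagrangian splitting with associated bivector π ∈ ∧²V (defined by π^♯(α) = -pr_V(p(α)), p the projection onto E along F). Then the graph of π equals the 'wedge product' Eᵀ ∧ F := {v⊕α : ∃ α₁, α₂ with v⊕α₁ ∈ E, v⊕α₂ ∈ F, α = α₂ - α₁}. In particular ran(π^♯) = ran(E) ∩ ran(F). -/

import Mathlib

/-!
The decomposition `(0, α) = -(v, α₁) + (v, α₂)` with `(v, α₁) ∈ E` and `(v, α₂) ∈ F` is the
splitting of `(0, α)` along `E ⊕ F`, so it exists exactly when `p (0, α) = -(v, α₁)`, i.e. when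
`v = π^♯ α` with `α = α₂ - α₁`.
-/

open Module

/-- The pairing bilinear form on `𝕍 = V ⊕ V*`. -/
noncomputable def vPairing (K V : Type*) [Field K] [AddCommGroup V] [Module K V] :
    LinearMap.BilinForm K (V × Module.Dual K V) :=
  LinearMap.mk₂ K (fun w u => w.2 u.1 + u.2 w.1)
    (fun w w' u => by simp; ring)
    (fun c w u => by simp; ring)
    (fun w u u' => by simp; ring)
    (fun c w u => by simp; ring)

section Projection

variable {R M : Type*} [Ring R] [AddCommGroup M] [Module R M] {E F : Submodule R M}
  {p : M →ₗ[R] M}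

theorem Submodule.apply_mem_and_sub_apply_mem_of_codisjoint (hEF : Codisjoint E F)
    (hpE : ∀ w ∈ E, p w = w) (hpF : ∀ w ∈ F, p w = 0) (w : M) : p w ∈ E ∧ w - p w ∈ F := by
  obtain ⟨e, f, he, hf, rfl⟩ := Submodule.codisjoint_iff_exists_add_eq.mp hEF w
  have hp : p (e + f) = e := by rw [map_add, hpE e he, hpF f hf, add_zero]
  rw [hp, add_sub_cancel_left]
  exact ⟨he, hf⟩

end Projection

section Graph

variable {R V W : Type*} [Ring R] [AddCommGroup V] [Module R V] [AddCommGroup W] [Module R W]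
  {E F : Submodule R (V × W)} {p : V × W →ₗ[R] V × W}

theorem eq_neg_fst_apply_inr_iff (hEF : Codisjoint E F) (hpE : ∀ w ∈ E, p w = w)
    (hpF : ∀ w ∈ F, p w = 0) (v : V) (α : W) :
    v = -(p (0, α)).1 ↔ ∃ α₁ α₂ : W, (v, α₁) ∈ E ∧ (v, α₂) ∈ F ∧ α = α₂ - α₁ := by
  constructor
  · intro hv
    obtain ⟨hE, hF⟩ := Submodule.apply_mem_and_sub_apply_mem_of_codisjoint hEF hpE hpF (0, α)
    have hE' : (v, -(p (0, α)).2) = -p (0, α) := by ext <;> simp [hv]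
    have hF' : (v, α - (p (0, α)).2) = (0, α) - p (0, α) := by ext <;> simp [hv]
    exact ⟨_, _, hE' ▸ neg_mem hE, hF' ▸ hF, by abel⟩
  · rintro ⟨α₁, α₂, h₁, h₂, rfl⟩
    have hsplit : ((0 : V), α₂ - α₁) = (v, α₂) - (v, α₁) := by ext <;> simp
    rw [hsplit, map_sub, hpE _ h₁, hpF _ h₂]
    simp

theorem exists_eq_neg_fst_apply_inr_iff (hEF : Codisjoint E F) (hpE : ∀ w ∈ E, p w = w)
    (hpF : ∀ w ∈ F, p w = 0) (v : V) :
    (∃ α : W, v = -(p (0, α)).1) ↔ (∃ α₁ : W, (v, α₁) ∈ E) ∧ (∃ α₂ : W, (v, α₂) ∈ F) := by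
  simp_rw [eq_neg_fst_apply_inr_iff hEF hpE hpF]
  constructor
  · rintro ⟨α, α₁, α₂, h₁, h₂, -⟩
    exact ⟨⟨α₁, h₁⟩, ⟨α₂, h₂⟩⟩
  · rintro ⟨⟨α₁, h₁⟩, ⟨α₂, h₂⟩⟩
    exact ⟨α₂ - α₁, α₁, α₂, h₁, h₂, rfl⟩

end Graph

theorem pure_spinors_stmt12_general {K V : Type*} [Field K] [AddCommGroup V] [Module K V]
    (E F : Submodule K (V × Module.Dual K V))
    (hcompl : IsCompl E F)
    (p : (V × Module.Dual K V) →ₗ[K] (V × Module.Dual K V))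
    (hpE : ∀ w ∈ E, p w = w) (hpF : ∀ w ∈ F, p w = 0) :
    (∀ w : V × Module.Dual K V,
      w.1 = -(p ((0 : V), w.2)).1 ↔
        ∃ α₁ α₂ : Module.Dual K V, (w.1, α₁) ∈ E ∧ (w.1, α₂) ∈ F ∧ w.2 = α₂ - α₁) ∧
    (∀ v : V,
      (∃ α : Module.Dual K V, v = -(p ((0 : V), α)).1) ↔
        ((∃ α₁ : Module.Dual K V, (v, α₁) ∈ E) ∧ (∃ α₂ : Module.Dual K V, (v, α₂) ∈ F))) :=
  ⟨fun w => eq_neg_fst_apply_inr_iff hcompl.codisjoint hpE hpF w.1 w.2,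
    exists_eq_neg_fst_apply_inr_iff hcompl.codisjoint hpE hpF⟩

/-- for a Lagrangian splitting `𝕍 = E ⊕ F` with projection `p` onto `E` along
`F`, the bivector `π` (with `π^♯(α) = -pr_V(p(α))`) has graph
`Gr_π = Eᵀ ∧ F = {v⊕α : ∃ α₁ α₂, v⊕α₁ ∈ E, v⊕α₂ ∈ F, α = α₂ - α₁}`; in particular
`ran(π^♯) = ran(E) ∩ ran(F)`. -/
theorem pure_spinors_stmt12 {K V : Type*} [Field K] [CharZero K] [AddCommGroup V] [Module K V]
    [FiniteDimensional K V]
    (E F : Submodule K (V × Module.Dual K V))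
    (hElag : E = (vPairing K V).orthogonal E)
    (hFlag : F = (vPairing K V).orthogonal F)
    (hcompl : IsCompl E F)
    (p : (V × Module.Dual K V) →ₗ[K] (V × Module.Dual K V))
    (hpE : ∀ w ∈ E, p w = w) (hpF : ∀ w ∈ F, p w = 0) :
    (∀ w : V × Module.Dual K V,
      w.1 = -(p ((0 : V), w.2)).1 ↔
        ∃ α₁ α₂ : Module.Dual K V, (w.1, α₁) ∈ E ∧ (w.1, α₂) ∈ F ∧ w.2 = α₂ - α₁) ∧
    (∀ v : V,
      (∃ α : Module.Dual K V, v = -(p ((0 : V), α)).1) ↔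
        ((∃ α₁ : Module.Dual K V, (v, α₁) ∈ E) ∧ (∃ α₂ : Module.Dual K V, (v, α₂) ∈ F))) :=
  pure_spinors_stmt12_general E F hcompl p hpE hpF
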